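/- arXiv:2305.10227 — 2 statements merged into one kernel-verified Lean document; each statement's English description precedes it below -/
import Mathlib

section
/- Let A be a real symmetric n×n matrix, let S' ⊆ S ⊆ {1,…,n}, set m := |S| − |S'|, and suppose ‖A_S‖_op ≤ L for some real L ≥ 0. Then SDP(A_S − A_{S'}) ≤ L·(m + 2·√(m·n)). In particular, if |S| − |S'| ≤ μn for some μ ∈ [0,1], then SDP(A_S − A_{S'}) ≤ 3·L·√μ·n. -/
open Matrix

/-- Frobenius inner product ⟨A, B⟩ = Σ_{i,j} A_ij B_ij. -/
noncomputable def mip {n : ℕ} (A B : Matrix (Fin n) (Fin n) ℝ) : ℝ :=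
  ∑ i, ∑ j, A i j * B i j

/-- Basic SDP value of a matrix. -/
noncomputable def SDP {n : ℕ} (M : Matrix (Fin n) (Fin n) ℝ) : ℝ :=
  sSup {v : ℝ | ∃ X : Matrix (Fin n) (Fin n) ℝ,
    X.PosSemidef ∧ (∀ i, X i i = 1) ∧ v = mip M X}

/-- Restriction M_S of a matrix to a principal submatrix (zeroing entries outside S×S). -/
def restrict {n : ℕ} (M : Matrix (Fin n) (Fin n) ℝ) (S : Finset (Fin n)) :
    Matrix (Fin n) (Fin n) ℝ :=
  fun i j => if i ∈ S ∧ j ∈ S then M i j else 0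

/-- Spectral norm (ℓ²→ℓ² operator norm) of a real matrix. -/
noncomputable def opNorm {n : ℕ} (M : Matrix (Fin n) (Fin n) ℝ) : ℝ :=
  ‖LinearMap.toContinuousLinearMap (Matrix.toEuclideanLin M)‖

lemma euclid_norm_sq {n : ℕ} (u : Fin n → ℝ) :
    ‖((WithLp.equiv 2 (Fin n → ℝ)).symm u : EuclideanSpace ℝ (Fin n))‖
      = Real.sqrt (∑ i, u i ^ 2) := by
  rw [EuclideanSpace.norm_eq]
  congr 1
  refine Finset.sum_congr rfl fun i _ => ?_
  simp [WithLp.equiv_symm_apply, sq_abs]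

lemma bilin_bound {n : ℕ} {L : ℝ} (B : Matrix (Fin n) (Fin n) ℝ)
    (hB : opNorm B ≤ L) (u w : Fin n → ℝ) :
    ∑ i, ∑ j, B i j * u i * w j ≤
      L * (Real.sqrt (∑ i, u i ^ 2) * Real.sqrt (∑ j, w j ^ 2)) := by
  set u' : EuclideanSpace ℝ (Fin n) := (WithLp.equiv 2 _).symm u with hu'
  set w' : EuclideanSpace ℝ (Fin n) := (WithLp.equiv 2 _).symm w with hw'
  have h1 : ∑ i, ∑ j, B i j * u i * w j = (inner ℝ u' (Matrix.toEuclideanLin B w') : ℝ) := by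
    rw [hw', WithLp.equiv_symm_apply, Matrix.toEuclideanLin_apply_piLp_toLp, PiLp.inner_apply]
    simp only [RCLike.inner_apply, conj_trivial, PiLp.toLp_apply, hu', WithLp.equiv_symm_apply,
      Matrix.mulVec, dotProduct]
    refine Finset.sum_congr rfl fun j _ => ?_
    rw [Finset.sum_mul]
    refine Finset.sum_congr rfl fun i _ => ?_
    ring
  have hop2 : ‖Matrix.toEuclideanLin B w'‖ ≤ L * ‖w'‖ := by
    have h := (LinearMap.toContinuousLinearMap (Matrix.toEuclideanLin B)).le_opNorm w'
    rw [LinearMap.coe_toContinuousLinearMap'] at h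
    exact le_trans h (mul_le_mul_of_nonneg_right hB (norm_nonneg _))
  calc ∑ i, ∑ j, B i j * u i * w j
      = (inner ℝ u' (Matrix.toEuclideanLin B w') : ℝ) := h1
    _ ≤ ‖u'‖ * ‖Matrix.toEuclideanLin B w'‖ := real_inner_le_norm _ _
    _ ≤ ‖u'‖ * (L * ‖w'‖) := mul_le_mul_of_nonneg_left hop2 (norm_nonneg _)
    _ = L * (Real.sqrt (∑ i, u i ^ 2) * Real.sqrt (∑ j, w j ^ 2)) := by
        rw [hu', hw', euclid_norm_sq, euclid_norm_sq]; ring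

lemma cs_sqrt {n : ℕ} (s t : Fin n → ℝ) (hs : ∀ k, 0 ≤ s k) (ht : ∀ k, 0 ≤ t k) :
    ∑ k, Real.sqrt (s k) * Real.sqrt (t k) ≤
      Real.sqrt (∑ k, s k) * Real.sqrt (∑ k, t k) := by
  have h2 : (∑ k, Real.sqrt (s k) * Real.sqrt (t k)) ^ 2 ≤ (∑ k, s k) * (∑ k, t k) := by
    have h := Finset.sum_mul_sq_le_sq_mul_sq Finset.univ
      (fun k => Real.sqrt (s k)) (fun k => Real.sqrt (t k))
    simpa [Real.sq_sqrt (hs _), Real.sq_sqrt (ht _)] using h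
  calc ∑ k, Real.sqrt (s k) * Real.sqrt (t k)
      = Real.sqrt ((∑ k, Real.sqrt (s k) * Real.sqrt (t k)) ^ 2) := by
        rw [Real.sqrt_sq (Finset.sum_nonneg fun k _ =>
          mul_nonneg (Real.sqrt_nonneg _) (Real.sqrt_nonneg _))]
    _ ≤ Real.sqrt ((∑ k, s k) * (∑ k, t k)) := Real.sqrt_le_sqrt h2
    _ = Real.sqrt (∑ k, s k) * Real.sqrt (∑ k, t k) :=
        Real.sqrt_mul (Finset.sum_nonneg fun k _ => hs k) _

lemma sum_swap3 {n : ℕ} (f : Fin n → Fin n → Fin n → ℝ) :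
    ∑ i, ∑ j, ∑ k, f i j k = ∑ k, ∑ i, ∑ j, f i j k := by
  calc ∑ i, ∑ j, ∑ k, f i j k
      = ∑ i, ∑ k, ∑ j, f i j k :=
        Finset.sum_congr rfl fun i _ => Finset.sum_comm
    _ = ∑ k, ∑ i, ∑ j, f i j k := Finset.sum_comm

/-- A spectral norm bound on a principal submatrix controls the basic SDP value
of the difference of nested principal restrictions: with m := |S| − |S'|,
SDP(A_S − A_{S'}) ≤ L·(m + 2√(mn)); in particular if |S| − |S'| ≤ μn with
μ ∈ [0,1], then SDP(A_S − A_{S'}) ≤ 3·L·√μ·n. -/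
theorem sdp_restrict_diff_le {n : ℕ} (A : Matrix (Fin n) (Fin n) ℝ)
    (hA : A.IsSymm) (S S' : Finset (Fin n)) (hSS : S' ⊆ S)
    (L : ℝ) (hL : 0 ≤ L) (hop : opNorm (restrict A S) ≤ L) :
    SDP (restrict A S - restrict A S') ≤
      L * (((S.card : ℝ) - (S'.card : ℝ)) +
        2 * Real.sqrt (((S.card : ℝ) - (S'.card : ℝ)) * n)) ∧
    ∀ μ : ℝ, 0 ≤ μ → μ ≤ 1 → (S.card : ℝ) - (S'.card : ℝ) ≤ μ * n →
      SDP (restrict A S - restrict A S') ≤ 3 * L * Real.sqrt μ * n := by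
  classical
  set D : Finset (Fin n) := S \ S' with hD
  have hmD : (D.card : ℝ) = (S.card : ℝ) - (S'.card : ℝ) := by
    rw [hD, Finset.card_sdiff_of_subset hSS, Nat.cast_sub (Finset.card_le_card hSS)]
  set m : ℝ := (S.card : ℝ) - (S'.card : ℝ) with hm
  have hm0 : 0 ≤ m := by rw [← hmD]; positivity
  have hn0 : (0:ℝ) ≤ n := Nat.cast_nonneg n
  have main : SDP (restrict A S - restrict A S') ≤ L * (m + 2 * Real.sqrt (m * n)) := by
    apply Real.sSup_le
    · rintro v ⟨X, hX, hdiag, rfl⟩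
      obtain ⟨C, hC⟩ : ∃ C : Matrix (Fin n) (Fin n) ℝ, X = Cᴴ * C := by
        open scoped MatrixOrder in
        exact CStarAlgebra.nonneg_iff_eq_star_mul_self.mp hX.nonneg
      have hXij : ∀ i j, X i j = ∑ k, C k i * C k j := by
        intro i j
        rw [hC]
        simp [Matrix.mul_apply, Matrix.conjTranspose_apply]
      set B := restrict A S with hB
      set u : Fin n → Fin n → ℝ := fun k i => if i ∈ D then C k i else 0 with hu
      have hR' : ∀ i j, restrict A S' i j =
          if i ∈ D ∨ j ∈ D then 0 else B i j := by
        intro i j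
        simp only [hB, restrict, hD, Finset.mem_sdiff]
        by_cases hi : i ∈ S <;> by_cases hj : j ∈ S <;>
          by_cases hi' : i ∈ S' <;> by_cases hj' : j ∈ S' <;>
          first
            | exact absurd (hSS hi') hi
            | exact absurd (hSS hj') hj
            | simp [hi, hj, hi', hj']
      have hptw : ∀ i j, (B - restrict A S') i j * X i j =
          ∑ k, (B i j * u k i * C k j + B i j * C k i * u k j
            + B i j * u k i * (-(u k j))) := by
        intro i j
        rw [Matrix.sub_apply, hXij, hR', Finset.mul_sum]
        refine Finset.sum_congr rfl fun k _ => ?_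
        by_cases hiD : i ∈ D <;> by_cases hjD : j ∈ D <;>
          simp [hu, hiD, hjD] <;> ring
      have hsum_w : ∑ k, ∑ j, C k j ^ 2 = (n : ℝ) := by
        rw [Finset.sum_comm]
        have h1 : ∀ j, ∑ k, C k j ^ 2 = 1 := by
          intro j
          have := hdiag j
          rw [hXij] at this
          simpa [sq] using this
        simp [h1]
      have hsum_u : ∑ k, ∑ i, u k i ^ 2 = m := by
        rw [Finset.sum_comm, ← hmD]
        have h1 : ∀ i, ∑ k, u k i ^ 2 = if i ∈ D then 1 else 0 := by
          intro i
          by_cases hiD : i ∈ D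
          · have := hdiag i
            rw [hXij] at this
            simp only [hu, hiD, if_true]
            simpa [sq] using this
          · simp [hu, hiD]
        simp [h1]
      -- the three bounds
      have hbound : ∀ (p q : Fin n → Fin n → ℝ) (P Q : ℝ),
          (∑ k, ∑ i, p k i ^ 2) = P → (∑ k, ∑ j, q k j ^ 2) = Q →
          ∑ k, ∑ i, ∑ j, B i j * p k i * q k j ≤
            L * (Real.sqrt P * Real.sqrt Q) := by
        intro p q P Q hP hQ
        calc ∑ k, ∑ i, ∑ j, B i j * p k i * q k j
            ≤ ∑ k, L * (Real.sqrt (∑ i, p k i ^ 2) * Real.sqrt (∑ j, q k j ^ 2)) :=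
              Finset.sum_le_sum fun k _ => bilin_bound B hop (p k) (q k)
          _ = L * ∑ k, Real.sqrt (∑ i, p k i ^ 2) * Real.sqrt (∑ j, q k j ^ 2) := by
              rw [Finset.mul_sum]
          _ ≤ L * (Real.sqrt (∑ k, ∑ i, p k i ^ 2) * Real.sqrt (∑ k, ∑ j, q k j ^ 2)) := by
              apply mul_le_mul_of_nonneg_left _ hL
              exact cs_sqrt _ _ (fun k => Finset.sum_nonneg fun i _ => sq_nonneg _)
                (fun k => Finset.sum_nonneg fun j _ => sq_nonneg _)
          _ = L * (Real.sqrt P * Real.sqrt Q) := by rw [hP, hQ]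
      have hT1 : ∑ k, ∑ i, ∑ j, B i j * u k i * C k j ≤
          L * (Real.sqrt m * Real.sqrt n) :=
        hbound u (fun k j => C k j) m n hsum_u hsum_w
      have hT2 : ∑ k, ∑ i, ∑ j, B i j * C k i * u k j ≤
          L * (Real.sqrt n * Real.sqrt m) :=
        hbound (fun k i => C k i) u n m hsum_w hsum_u
      have hT3 : ∑ k, ∑ i, ∑ j, B i j * u k i * (-(u k j)) ≤
          L * (Real.sqrt m * Real.sqrt m) := by
        refine hbound u (fun k j => -(u k j)) m m hsum_u ?_
        simpa [neg_sq] using hsum_u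
      -- assemble
      have hmip : mip (B - restrict A S') X =
          (∑ k, ∑ i, ∑ j, B i j * u k i * C k j)
          + (∑ k, ∑ i, ∑ j, B i j * C k i * u k j)
          + (∑ k, ∑ i, ∑ j, B i j * u k i * (-(u k j))) := by
        unfold mip
        simp_rw [hptw]
        rw [sum_swap3]
        simp_rw [Finset.sum_add_distrib]
      have hsqmn : Real.sqrt m * Real.sqrt n = Real.sqrt (m * n) :=
        (Real.sqrt_mul hm0 _).symm
      have hsqm : Real.sqrt m * Real.sqrt m = m := Real.mul_self_sqrt hm0
      rw [hmip]
      calc _ ≤ L * (Real.sqrt m * Real.sqrt n) + L * (Real.sqrt n * Real.sqrt m)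
            + L * (Real.sqrt m * Real.sqrt m) := by
            exact add_le_add (add_le_add hT1 hT2) hT3
        _ = L * (m + 2 * Real.sqrt (m * n)) := by
            rw [← hsqmn]; linear_combination L * hsqm
    · have : 0 ≤ m + 2 * Real.sqrt (m * n) := by positivity
      positivity
  constructor
  · exact main
  · intro μ hμ0 hμ1 hmμ
    have hsq : Real.sqrt μ ^ 2 = μ := Real.sq_sqrt hμ0
    have hsq1 : Real.sqrt μ ≤ 1 := by
      rw [show (1:ℝ) = Real.sqrt 1 by simp]
      exact Real.sqrt_le_sqrt hμ1
    have hsqnn : 0 ≤ Real.sqrt μ := Real.sqrt_nonneg μ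
    have h1 : m ≤ Real.sqrt μ * n := by
      have hμs : μ ≤ Real.sqrt μ := by nlinarith
      calc m ≤ μ * n := hmμ
        _ ≤ Real.sqrt μ * n := mul_le_mul_of_nonneg_right hμs hn0
    have h2 : Real.sqrt (m * n) ≤ Real.sqrt μ * n := by
      have : m * n ≤ (Real.sqrt μ * n) ^ 2 := by
        have h3 := mul_le_mul_of_nonneg_right hmμ hn0
        rw [mul_pow, hsq, sq]
        nlinarith [h3]
      calc Real.sqrt (m * n) ≤ Real.sqrt ((Real.sqrt μ * n) ^ 2) := Real.sqrt_le_sqrt this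
        _ = Real.sqrt μ * n := Real.sqrt_sq (by positivity)
    calc SDP (restrict A S - restrict A S') ≤ L * (m + 2 * Real.sqrt (m * n)) := main
      _ ≤ L * (Real.sqrt μ * n + 2 * (Real.sqrt μ * n)) := by
          apply mul_le_mul_of_nonneg_left _ hL; linarith
      _ = 3 * L * Real.sqrt μ * n := by ring
end

section
/- Let n ≥ 1, d > 0, ε > 0, and let Δ, ρ, γ, μ, β be real numbers. Let Ã be a real symmetric n×n matrix, let x* ∈ {±1}^n and X* := x* (x*)^T, and let S' ⊆ S ⊆ {1,…,n}. Let X be a real n×n symmetric positive semidefinite matrix with X_ii = 1 for all i. Assume: (i) ⟨Ã_S, X⟩ ≥ (2+Δ)·(1−μ−β)·n·√d; (ii) SDP(Ã_S − Ã_{S'}) ≤ γ·n·√d; (iii) SDP(Ã_{S'} − (εd/n)·X*_{S'}) ≤ (2+ρ)·(1−2μ−β)·n·√d. Then ⟨X_{S'}, X*_{S'}⟩ ≥ (n²/(ε√d)) · ((2+Δ)(1−μ−β) − γ − (2+ρ)(1−2μ−β)). -/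
open Matrix

lemma entry_abs_le_one {n : ℕ} {X : Matrix (Fin n) (Fin n) ℝ}
    (hX : X.PosSemidef) (hXd : ∀ i, X i i = 1) (i j : Fin n) : |X i j| ≤ 1 := by
  obtain ⟨B, rfl⟩ : ∃ B : Matrix (Fin n) (Fin n) ℝ, X = Bᴴ * B := by
    open scoped MatrixOrder Matrix.Norms.L2Operator in
    obtain ⟨B, rfl⟩ := CStarAlgebra.nonneg_iff_eq_star_mul_self.mp hX.nonneg
    exact ⟨B, rfl⟩
  have key : ((Bᴴ * B) i j) ^ 2 ≤ 1 := by
    have hC := Finset.sum_mul_sq_le_sq_mul_sq Finset.univ (fun k => B k i) (fun k => B k j)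
    have hii := hXd i
    have hjj := hXd j
    simp only [Matrix.mul_apply, Matrix.conjTranspose_apply, RCLike.star_def, starRingEnd_apply,
      star_trivial] at *
    calc (∑ k, B k i * B k j) ^ 2 ≤ (∑ k, B k i ^ 2) * ∑ k, B k j ^ 2 := hC
      _ = 1 := by
          rw [show (∑ k, B k i ^ 2) = ∑ k, B k i * B k i by simp [sq],
            show (∑ k, B k j ^ 2) = ∑ k, B k j * B k j by simp [sq], hii, hjj]; ring
  nlinarith [abs_nonneg ((Bᴴ * B) i j), sq_abs ((Bᴴ * B) i j)]

lemma mip_le_SDP {n : ℕ} (M X : Matrix (Fin n) (Fin n) ℝ)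
    (hX : X.PosSemidef) (hXd : ∀ i, X i i = 1) : mip M X ≤ SDP M := by
  apply le_csSup
  · refine ⟨∑ i, ∑ j, |M i j|, ?_⟩
    rintro v ⟨Y, hY, hYd, rfl⟩
    unfold mip
    refine Finset.sum_le_sum fun i _ => Finset.sum_le_sum fun j _ => ?_
    calc M i j * Y i j ≤ |M i j * Y i j| := le_abs_self _
      _ = |M i j| * |Y i j| := abs_mul _ _
      _ ≤ |M i j| * 1 := by
          exact mul_le_mul_of_nonneg_left (entry_abs_le_one hY hYd i j) (abs_nonneg _)
      _ = |M i j| := mul_one _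
  · exact ⟨X, hX, hXd, rfl⟩

lemma mip_sub_left {n : ℕ} (A B X : Matrix (Fin n) (Fin n) ℝ) :
    mip (A - B) X = mip A X - mip B X := by
  simp [mip, Matrix.sub_apply, sub_mul, Finset.sum_sub_distrib]

lemma mip_smul_left {n : ℕ} (c : ℝ) (A X : Matrix (Fin n) (Fin n) ℝ) :
    mip (c • A) X = c * mip A X := by
  simp [mip, Matrix.smul_apply, Finset.mul_sum, mul_assoc]

lemma mip_restrict_comm {n : ℕ} (A X : Matrix (Fin n) (Fin n) ℝ) (S : Finset (Fin n)) :
    mip (restrict A S) X = mip (restrict X S) (restrict A S) := by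
  unfold mip restrict
  refine Finset.sum_congr rfl fun i _ => Finset.sum_congr rfl fun j _ => ?_
  by_cases h : i ∈ S ∧ j ∈ S <;> simp [h, mul_comm]

/-- Deterministic core of Lemma 5.3: correlation lower bound on the
uncorrupted submatrix S'. -/
theorem correlation_lower_bound_submatrix {n : ℕ} (hn : 1 ≤ n)
    (d ε : ℝ) (hd : 0 < d) (hε : 0 < ε) (Δ ρ γ μ β : ℝ)
    (Atil : Matrix (Fin n) (Fin n) ℝ) (hAsymm : Atil.IsSymm)
    (xstar : Fin n → ℝ) (hxs : ∀ i, xstar i = 1 ∨ xstar i = -1)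
    (Xstar : Matrix (Fin n) (Fin n) ℝ)
    (hXstar : Xstar = Matrix.vecMulVec xstar xstar)
    (S S' : Finset (Fin n)) (hSS : S' ⊆ S)
    (X : Matrix (Fin n) (Fin n) ℝ) (hX : X.PosSemidef) (hXd : ∀ i, X i i = 1)
    (h1 : (2 + Δ) * (1 - μ - β) * n * Real.sqrt d ≤ mip (restrict Atil S) X)
    (h2 : SDP (restrict Atil S - restrict Atil S') ≤ γ * n * Real.sqrt d)
    (h3 : SDP (restrict Atil S' - (ε * d / n) • restrict Xstar S') ≤
      (2 + ρ) * (1 - 2 * μ - β) * n * Real.sqrt d) :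
    ((n : ℝ) ^ 2 / (ε * Real.sqrt d)) *
        ((2 + Δ) * (1 - μ - β) - γ - (2 + ρ) * (1 - 2 * μ - β)) ≤
      mip (restrict X S') (restrict Xstar S') := by
  set s := Real.sqrt d with hs
  have hs0 : 0 < s := Real.sqrt_pos.mpr hd
  have hss : s * s = d := Real.mul_self_sqrt hd.le
  have hn0 : (0:ℝ) < n := by exact_mod_cast hn
  set C := (2 + Δ) * (1 - μ - β) - γ - (2 + ρ) * (1 - 2 * μ - β) with hC
  set T := mip (restrict Xstar S') X with hT
  -- step 1
  have e2 : mip (restrict Atil S - restrict Atil S') X ≤ γ * n * s :=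
    le_trans (mip_le_SDP _ _ hX hXd) h2
  have e3 : mip (restrict Atil S' - (ε * d / n) • restrict Xstar S') X ≤
      (2 + ρ) * (1 - 2 * μ - β) * n * s :=
    le_trans (mip_le_SDP _ _ hX hXd) h3
  rw [mip_sub_left] at e2 e3
  rw [mip_smul_left] at e3
  -- combine
  have key : C * (n * s) ≤ (ε * d / n) * T := by
    rw [hC]; nlinarith [h1, e2, e3]
  have hgoal_eq : mip (restrict X S') (restrict Xstar S') = T := by
    rw [hT, mip_restrict_comm]
    unfold mip restrict
    refine Finset.sum_congr rfl fun i _ => Finset.sum_congr rfl fun j _ => ?_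
    by_cases h : i ∈ S' ∧ j ∈ S' <;> simp [h]
  rw [hgoal_eq]
  rw [div_mul_eq_mul_div, div_le_iff₀ (by positivity)]
  have := mul_le_mul_of_nonneg_right key (le_of_lt (show (0:ℝ) < n * s / d by positivity))
  calc (n:ℝ)^2 * C = C * (n * s) * (n * s / d) := by
        rw [← hss]; field_simp
    _ ≤ (ε * d / n) * T * (n * s / d) := this
    _ = T * (ε * s) := by field_simp
end
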